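/- Let R be a commutative 𝔽_p-algebra and let 𝕎₁(R) denote the zip frame of R. Then 𝕎₁(R) is a final object among frames for R: for every frame (S, σ, τ) for R, the maps πₙ : Sₙ → R defined by π₀ = the projection S₀ → R = S₀/tS₁, π₋ₙ(a) = π₀(τ(a)) for a ∈ S₋ₙ with n ≥ 1, and πₙ(b) = π₀(σ(b)) for b ∈ Sₙ with n ≥ 1, assemble to the unique homomorphism of frames S → 𝕎₁(R) inducing the identity of R. -/

import Mathlib

/-- A (higher) frame. -/
structure Frame (p : ℕ) (S : Type) [CommRing S] where
  grade : ℤ → AddSubgroup S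
  one_mem : (1 : S) ∈ grade 0
  mul_mem : ∀ {m n : ℤ} {a b : S}, a ∈ grade m → b ∈ grade n → a * b ∈ grade (m + n)
  isInternal : DirectSum.IsInternal grade
  σ : S →+* S
  τ : S →+* S
  σ_mem : ∀ s, σ s ∈ grade 0
  τ_mem : ∀ s, τ s ∈ grade 0
  τ_id : ∀ s ∈ grade 0, τ s = s
  τ_bij : ∀ n : ℕ, 1 ≤ n → Set.BijOn τ (grade (-(n : ℤ))) (grade 0)
  t : S
  t_mem : t ∈ grade (-1)
  τ_t : τ t = 1
  σ_frob : ∀ s ∈ grade 0, ∃ c ∈ grade 0, σ s = s ^ p + (p : S) * c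
  σ_t : σ t = (p : S)
  p_jac : ∀ x ∈ grade 0, ∃ y ∈ grade 0, (1 - (p : S) * x) * y = 1

variable {p : ℕ} {S : Type} [CommRing S]

/-- The degree zero subring S₀ of a frame. -/
def Frame.S0 (F : Frame p S) : Subring S where
  carrier := F.grade 0
  mul_mem' {a b} ha hb := by simpa using F.mul_mem ha hb
  one_mem' := F.one_mem
  add_mem' {a b} ha hb := add_mem ha hb
  zero_mem' := zero_mem _
  neg_mem' {a} ha := neg_mem ha

/-- The ideal tS₁ ⊆ S₀. -/
def Frame.tS1 (F : Frame p S) : Ideal F.S0 where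
  carrier := {a | ∃ x ∈ F.grade 1, (a : S) = F.t * x}
  add_mem' := by
    rintro a b ⟨x, hx, hax⟩ ⟨y, hy, hby⟩
    exact ⟨x + y, add_mem hx hy, by push_cast [hax, hby]; ring⟩
  zero_mem' := ⟨0, zero_mem _, by simp⟩
  smul_mem' := by
    rintro c a ⟨x, hx, hax⟩
    refine ⟨(c : S) * x, by simpa using F.mul_mem c.2 hx, ?_⟩
    show ((c * a : F.S0) : S) = _
    push_cast [hax]; ring

/-- The ring R = S₀/tS₁ of a frame. -/
abbrev Frame.R (F : Frame p S) : Type := F.S0 ⧸ F.tS1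

/-- The kernel of ρ : S → R, the graded ideal with K₀ = tS₁ and Kₙ = Sₙ for n ≠ 0. -/
def Frame.kerRho (F : Frame p S) : Ideal S :=
  Ideal.span ({s : S | ∃ x ∈ F.grade 1, s = F.t * x} ∪ ⋃ (n : ℤ) (_ : n ≠ 0), (F.grade n : Set S))


noncomputable section Zip

open Polynomial

variable (p : ℕ) [hp : Fact p.Prime] (R : Type) [CommRing R] [CharP R p]

/-- The underlying ring of the zip frame of an `𝔽_p`-algebra `R`, realized as the fiber
product `R[t] ×_{Frob,R} R[u] = {(f,g) | f(0)^p = g(0)}`. -/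
def zipSubring : Subring (Polynomial R × Polynomial R) where
  carrier := {x | x.1.coeff 0 ^ p = x.2.coeff 0}
  one_mem' := by simp
  mul_mem' := by
    rintro x y hx hy
    simp only [Set.mem_setOf_eq, Prod.fst_mul, Prod.snd_mul, Polynomial.mul_coeff_zero,
      mul_pow] at *
    rw [hx, hy]
  add_mem' := by
    rintro x y hx hy
    simp only [Set.mem_setOf_eq, Prod.fst_add, Prod.snd_add, Polynomial.coeff_add] at *
    rw [add_pow_char, hx, hy]
  zero_mem' := by
    simp [zero_pow hp.out.ne_zero]
  neg_mem' := by
    rintro x hx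
    simp only [Set.mem_setOf_eq, Prod.fst_neg, Prod.snd_neg, Polynomial.coeff_neg] at *
    rw [neg_pow, neg_one_pow_char, hx]; ring

/-- The grading of the zip frame: the degree `n` part consists of the pairs `(a tⁿ, 0)` for
`n < 0` (where `t` is the first variable), of the pairs `(a, a^p)` for `n = 0`, and of the
pairs `(0, a uⁿ)` for `n > 0` (where `u` is the second variable); in each case the part is
a copy of `R` as an abelian group. -/
def zipGrade (n : ℤ) : AddSubgroup (zipSubring p R) where
  carrier := {x | ∃ a : R, (x : Polynomial R × Polynomial R) =
      if n < 0 then (Polynomial.C a * Polynomial.X ^ (-n).toNat, 0)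
      else if n = 0 then (Polynomial.C a, Polynomial.C (a ^ p))
      else (0, Polynomial.C a * Polynomial.X ^ n.toNat)}
  zero_mem' := ⟨0, by split_ifs <;> simp [zero_pow hp.out.ne_zero] <;> rfl⟩
  add_mem' := by
    rintro x y ⟨a, ha⟩ ⟨b, hb⟩
    refine ⟨a + b, ?_⟩
    have hxy : ((x + y : zipSubring p R) : Polynomial R × Polynomial R)
        = (x : Polynomial R × Polynomial R) + (y : Polynomial R × Polynomial R) := rfl
    rw [hxy, ha, hb]
    split_ifs with h1 h2
    · simp [Prod.ext_iff, add_mul]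
    · simp [Prod.ext_iff, add_pow_char]
    · simp [Prod.ext_iff, add_mul]
  neg_mem' := by
    rintro x ⟨a, ha⟩
    refine ⟨-a, ?_⟩
    have hnegpow : (-a) ^ p = -(a ^ p) := by
      rw [neg_pow, neg_one_pow_char, neg_one_mul]
    have hx : ((-x : zipSubring p R) : Polynomial R × Polynomial R)
        = -(x : Polynomial R × Polynomial R) := rfl
    rw [hx, ha]
    split_ifs with h1 h2
    · simp [Prod.ext_iff, neg_mul]
    · simp [Prod.ext_iff, hnegpow]
    · simp [Prod.ext_iff, neg_mul]

/-- The embedding `R ≅ T₀ ⊆ T`, `a ↦ (a, a^p)`. -/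
def zipIota : R →+* zipSubring p R :=
  (RingHom.prod (Polynomial.C) ((Polynomial.C).comp (frobenius R p))).codRestrict
    (zipSubring p R) (fun a => by
      show (Polynomial.C a).coeff 0 ^ p = (Polynomial.C (frobenius R p a)).coeff 0
      simp only [frobenius_def, Polynomial.coeff_C_zero])

lemma coe_zipIota (a : R) :
    ((zipIota p R a : zipSubring p R) : Polynomial R × Polynomial R)
      = (Polynomial.C a, Polynomial.C (a ^ p)) := by
  rw [show ((zipIota p R a : zipSubring p R) : Polynomial R × Polynomial R)
      = (Polynomial.C a, Polynomial.C (frobenius R p a)) from rfl, frobenius_def]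

lemma zipIota_mem_zero (a : R) : zipIota p R a ∈ zipGrade p R 0 :=
  ⟨a, by rw [coe_zipIota]; norm_num⟩

/-- `τ : T → T₀ ⊆ T` is given by `(f, g) ↦ f(1)`. -/
def zipTau : zipSubring p R →+* zipSubring p R :=
  (zipIota p R).comp ((Polynomial.evalRingHom (1 : R)).comp
    ((RingHom.fst (Polynomial R) (Polynomial R)).comp (zipSubring p R).subtype))

/-- `σ : T → T₀ ⊆ T` is given by `(f, g) ↦ g(1)`. -/
def zipSigma : zipSubring p R →+* zipSubring p R :=
  (zipIota p R).comp ((Polynomial.evalRingHom (1 : R)).comp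
    ((RingHom.snd (Polynomial R) (Polynomial R)).comp (zipSubring p R).subtype))

lemma zipTau_apply (x : zipSubring p R) :
    zipTau p R x = zipIota p R ((x : Polynomial R × Polynomial R).1.eval 1) := rfl

lemma zipSigma_apply (x : zipSubring p R) :
    zipSigma p R x = zipIota p R ((x : Polynomial R × Polynomial R).2.eval 1) := rfl

/-- The element `t = (X, 0)` of the zip frame. -/
def zipT : zipSubring p R :=
  ⟨(Polynomial.X, 0), by
    show (Polynomial.X : Polynomial R).coeff 0 ^ p = (0 : Polynomial R).coeff 0
    simp [zero_pow hp.out.ne_zero]⟩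

lemma zip_charP : ((p : ℕ) : zipSubring p R) = 0 :=
  Subtype.ext (Prod.ext (CharP.cast_eq_zero (Polynomial R) p) (CharP.cast_eq_zero (Polynomial R) p))

/-- The projection `T → R` identifying `T₀ = T₀/tT₁` with `R`. -/
def zipPi : zipSubring p R →+* R :=
  (Polynomial.evalRingHom (1 : R)).comp
    ((RingHom.fst (Polynomial R) (Polynomial R)).comp (zipSubring p R).subtype)

/-- The degree-`n` coordinate of an element of the zip ring. -/
def zipCoord (n : ℤ) : zipSubring p R →+ R where
  toFun x := if n ≤ 0 then (x : Polynomial R × Polynomial R).1.coeff (-n).toNat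
    else (x : Polynomial R × Polynomial R).2.coeff n.toNat
  map_zero' := by split_ifs <;> simp
  map_add' := by
    intro x y
    have h : ((x + y : zipSubring p R) : Polynomial R × Polynomial R)
        = (x : Polynomial R × Polynomial R) + (y : Polynomial R × Polynomial R) := rfl
    split_ifs <;> simp [h]

lemma zipCoord_eq_zero_of_ne {m n : ℤ} (hmn : m ≠ n) {x : zipSubring p R}
    (hx : x ∈ zipGrade p R m) : zipCoord p R n x = 0 := by
  obtain ⟨a, ha⟩ := hx
  show (if n ≤ 0 then (x : Polynomial R × Polynomial R).1.coeff (-n).toNat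
    else (x : Polynomial R × Polynomial R).2.coeff n.toNat) = 0
  split_ifs at ha with h2 h3
  · rw [ha]
    split_ifs with h1
    · rw [Polynomial.coeff_C_mul, Polynomial.coeff_X_pow,
        if_neg (by omega : ¬ (-n).toNat = (-m).toNat), mul_zero]
    · simp
  · rw [ha]
    split_ifs with h1
    · rw [Polynomial.coeff_C, if_neg (by omega : ¬ (-n).toNat = 0)]
    · rw [Polynomial.coeff_C, if_neg (by omega : ¬ n.toNat = 0)]
  · rw [ha]
    split_ifs with h1
    · simp
    · rw [Polynomial.coeff_C_mul, Polynomial.coeff_X_pow,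
        if_neg (by omega : ¬ n.toNat = m.toNat), mul_zero]

lemma eq_zero_of_zipCoord_eq_zero {n : ℤ} {x : zipSubring p R}
    (hx : x ∈ zipGrade p R n) (h : zipCoord p R n x = 0) : x = 0 := by
  obtain ⟨a, ha⟩ := hx
  have hshow : zipCoord p R n x
      = (if n ≤ 0 then (x : Polynomial R × Polynomial R).1.coeff (-n).toNat
        else (x : Polynomial R × Polynomial R).2.coeff n.toNat) := rfl
  split_ifs at ha with h2 h3
  · have hcoord : zipCoord p R n x = a := by
      rw [hshow, if_pos (by omega : n ≤ 0), ha, Polynomial.coeff_C_mul,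
        Polynomial.coeff_X_pow, if_pos rfl, mul_one]
    rw [hcoord] at h
    subst h
    apply Subtype.ext
    rw [ha]
    simp
  · have hcoord : zipCoord p R n x = a := by
      rw [hshow, if_pos (by omega : n ≤ 0), ha]
      have ht : (-n).toNat = 0 := by omega
      rw [ht, Polynomial.coeff_C_zero]
    rw [hcoord] at h
    subst h
    apply Subtype.ext
    rw [ha]
    simp [zero_pow hp.out.ne_zero]
  · have hcoord : zipCoord p R n x = a := by
      rw [hshow, if_neg (by omega : ¬ n ≤ 0), ha, Polynomial.coeff_C_mul,
        Polynomial.coeff_X_pow, if_pos rfl, mul_one]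
    rw [hcoord] at h
    subst h
    apply Subtype.ext
    rw [ha]
    simp

lemma poly_decomp (f : Polynomial R) :
    Polynomial.C (f.coeff 0) + ∑ k ∈ f.support.erase 0,
      Polynomial.C (f.coeff k) * Polynomial.X ^ k = f := by
  conv_rhs => rw [f.as_sum_support]
  simp_rw [Polynomial.C_mul_X_pow_eq_monomial]
  by_cases h0 : 0 ∈ f.support
  · rw [← Finset.add_sum_erase _ _ h0, Polynomial.monomial_zero_left]
  · rw [Finset.erase_eq_of_notMem h0, Polynomial.notMem_support_iff.mp h0, map_zero,
      zero_add]

set_option maxHeartbeats 2000000 in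
/-- The grading of the zip frame is an internal direct sum decomposition. -/
lemma zipGrade_isInternal : DirectSum.IsInternal (zipGrade p R) := by
  classical
  constructor
  · -- injectivity
    rw [injective_iff_map_eq_zero]
    intro v hv
    refine DFinsupp.ext fun n => ?_
    have hsum : ∑ i ∈ DFinsupp.support v, ((v i : zipSubring p R)) = 0 := by
      have h1 := congrArg (DirectSum.coeAddMonoidHom (zipGrade p R))
        (DirectSum.sum_support_of v)
      rw [map_sum] at h1
      simp only [DirectSum.coeAddMonoidHom_of] at h1
      rw [h1, hv]
    have hcoord : zipCoord p R n ((v n : zipSubring p R)) = 0 := by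
      have happ := congrArg (zipCoord p R n) hsum
      rw [map_sum, map_zero] at happ
      by_cases hn : n ∈ DFinsupp.support v
      · rw [Finset.sum_eq_single_of_mem n hn
          (fun i _ hi => zipCoord_eq_zero_of_ne p R hi (v i).2)] at happ
        exact happ
      · rw [DFinsupp.notMem_support_iff.mp hn]
        simp
    have hzero := eq_zero_of_zipCoord_eq_zero p R (v n).2 hcoord
    simpa using hzero
  · -- surjectivity
    rintro ⟨⟨f, g⟩, hfg⟩
    have hfg' : f.coeff 0 ^ p = g.coeff 0 := hfg
    have hmemneg : ∀ k ∈ f.support.erase 0,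
        ((Polynomial.C (f.coeff k) * Polynomial.X ^ k, 0) : Polynomial R × Polynomial R)
          ∈ zipSubring p R := by
      intro k hk
      have hk0 : k ≠ 0 := Finset.ne_of_mem_erase hk
      have hc : (Polynomial.C (f.coeff k) * Polynomial.X ^ k).coeff 0 ^ p
          = (0 : Polynomial R).coeff 0 := by
        rw [Polynomial.coeff_C_mul, Polynomial.coeff_X_pow, if_neg (by omega : ¬ 0 = k)]
        simp [zero_pow hp.out.ne_zero]
      exact hc
    have hmempos : ∀ k ∈ g.support.erase 0,
        ((0, Polynomial.C (g.coeff k) * Polynomial.X ^ k) : Polynomial R × Polynomial R)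
          ∈ zipSubring p R := by
      intro k hk
      have hk0 : k ≠ 0 := Finset.ne_of_mem_erase hk
      have hc : ((0 : Polynomial R)).coeff 0 ^ p
          = (Polynomial.C (g.coeff k) * Polynomial.X ^ k).coeff 0 := by
        rw [Polynomial.coeff_C_mul, Polynomial.coeff_X_pow, if_neg (by omega : ¬ 0 = k)]
        simp [zero_pow hp.out.ne_zero]
      exact hc
    have hgradeneg : ∀ (k : {y // y ∈ f.support.erase 0}),
        (⟨_, hmemneg k.1 k.2⟩ : zipSubring p R) ∈ zipGrade p R (-(k.1 : ℤ)) := by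
      intro k
      have hk0 : k.1 ≠ 0 := Finset.ne_of_mem_erase k.2
      refine ⟨f.coeff k.1, ?_⟩
      rw [if_pos (by omega : -((k.1 : ℕ) : ℤ) < 0)]
      have ht : (-(-((k.1 : ℕ) : ℤ))).toNat = (k.1 : ℕ) := by omega
      rw [ht]
    have hgradepos : ∀ (k : {y // y ∈ g.support.erase 0}),
        (⟨_, hmempos k.1 k.2⟩ : zipSubring p R) ∈ zipGrade p R ((k.1 : ℤ)) := by
      intro k
      have hk0 : k.1 ≠ 0 := Finset.ne_of_mem_erase k.2
      refine ⟨g.coeff k.1, ?_⟩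
      rw [if_neg (by omega : ¬ ((k.1 : ℕ) : ℤ) < 0),
        if_neg (by omega : ¬ ((k.1 : ℕ) : ℤ) = 0)]
      have ht : (((k.1 : ℕ) : ℤ)).toNat = (k.1 : ℕ) := by omega
      rw [ht]
    have hEx : (⟨(f, g), hfg⟩ : zipSubring p R)
        = zipIota p R (f.coeff 0)
          + ∑ k ∈ (f.support.erase 0).attach,
              (⟨(Polynomial.C (f.coeff k.1) * Polynomial.X ^ (k.1 : ℕ), 0),
                hmemneg k.1 k.2⟩ : zipSubring p R)
          + ∑ k ∈ (g.support.erase 0).attach,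
              (⟨(0, Polynomial.C (g.coeff k.1) * Polynomial.X ^ (k.1 : ℕ)),
                hmempos k.1 k.2⟩ : zipSubring p R) := by
      apply Subtype.ext
      push_cast [AddSubmonoidClass.coe_finset_sum, Finset.sum_attach, coe_zipIota]
      apply Prod.ext
      · simp only [Prod.fst_add, Prod.fst_sum, Finset.sum_const_zero, add_zero]
        rw [Finset.sum_attach (f.support.erase 0)
          (fun k => Polynomial.C (f.coeff k) * Polynomial.X ^ k)]
        exact (poly_decomp R f).symm
      · simp only [Prod.snd_add, Prod.snd_sum, Finset.sum_const_zero, add_zero, zero_add]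
        rw [Finset.sum_attach (g.support.erase 0)
          (fun k => Polynomial.C (g.coeff k) * Polynomial.X ^ k), hfg']
        exact (poly_decomp R g).symm
    refine ⟨DirectSum.of (fun n => (zipGrade p R n)) 0
        ⟨zipIota p R (f.coeff 0), zipIota_mem_zero p R _⟩
      + ∑ k ∈ (f.support.erase 0).attach,
          DirectSum.of (fun n => (zipGrade p R n)) (-(k.1 : ℤ)) ⟨_, hgradeneg k⟩
      + ∑ k ∈ (g.support.erase 0).attach,
          DirectSum.of (fun n => (zipGrade p R n)) ((k.1 : ℤ)) ⟨_, hgradepos k⟩, ?_⟩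
    rw [map_add, map_add, map_sum, map_sum]
    simp only [DirectSum.coeAddMonoidHom_of]
    exact hEx.symm

/-- The zip frame `𝕎₁(R)` of an `𝔽_p`-algebra `R`. -/
def zipFrame : Frame p (zipSubring p R) where
  grade := zipGrade p R
  one_mem := ⟨1, by norm_num <;> rfl⟩
  mul_mem := by
    rintro m n x y ⟨a, ha⟩ ⟨b, hb⟩
    have hxy : ((x * y : zipSubring p R) : Polynomial R × Polynomial R)
        = (x : Polynomial R × Polynomial R) * (y : Polynomial R × Polynomial R) := rfl
    rcases lt_trichotomy m 0 with hm | hm | hm <;> rcases lt_trichotomy n 0 with hn | hn | hn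
    · -- m < 0, n < 0
      refine ⟨a * b, ?_⟩
      rw [hxy, ha, hb, if_pos hm, if_pos hn, if_pos (show m + n < 0 by omega)]
      have htn : (-(m + n)).toNat = (-m).toNat + (-n).toNat := by omega
      rw [htn]
      apply Prod.ext <;> simp [pow_add] <;> ring
    · -- m < 0, n = 0
      subst hn
      refine ⟨a * b, ?_⟩
      rw [hxy, ha, hb, if_pos hm, if_neg (show ¬ (0:ℤ) < 0 by omega),
        if_pos (rfl : (0:ℤ) = 0), if_pos (show m + 0 < 0 by omega)]
      have htn : (-(m + 0)).toNat = (-m).toNat := by omega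
      rw [htn]
      apply Prod.ext <;> simp <;> ring
    · -- m < 0 < n : the product vanishes
      refine ⟨0, ?_⟩
      rw [hxy, ha, hb, if_pos hm, if_neg (show ¬ n < 0 by omega),
        if_neg (show ¬ n = 0 by omega)]
      split_ifs <;> apply Prod.ext <;> simp [zero_pow hp.out.ne_zero]
    · -- m = 0, n < 0
      subst hm
      refine ⟨a * b, ?_⟩
      rw [hxy, ha, hb, if_pos hn, if_neg (show ¬ (0:ℤ) < 0 by omega),
        if_pos (rfl : (0:ℤ) = 0), if_pos (show (0:ℤ) + n < 0 by omega)]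
      have htn : (-((0:ℤ) + n)).toNat = (-n).toNat := by omega
      rw [htn]
      apply Prod.ext <;> simp <;> ring
    · -- m = 0, n = 0
      subst hm; subst hn
      refine ⟨a * b, ?_⟩
      rw [hxy, ha, hb, if_neg (show ¬ (0:ℤ) < 0 by omega), if_pos (rfl : (0:ℤ) = 0),
        if_neg (show ¬ (0:ℤ) + 0 < 0 by omega), if_pos (show (0:ℤ) + 0 = 0 by omega)]
      apply Prod.ext <;> simp [mul_pow]
    · -- m = 0 < n
      subst hm
      refine ⟨a ^ p * b, ?_⟩
      rw [hxy, ha, hb, if_neg (show ¬ (0:ℤ) < 0 by omega), if_pos (rfl : (0:ℤ) = 0),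
        if_neg (show ¬ n < 0 by omega), if_neg (show ¬ n = 0 by omega),
        if_neg (show ¬ (0:ℤ) + n < 0 by omega), if_neg (show ¬ (0:ℤ) + n = 0 by omega)]
      have htn : ((0:ℤ) + n).toNat = n.toNat := by omega
      rw [htn]
      apply Prod.ext <;> simp <;> ring
    · -- n < 0 < m : the product vanishes
      refine ⟨0, ?_⟩
      rw [hxy, ha, hb, if_pos hn, if_neg (show ¬ m < 0 by omega),
        if_neg (show ¬ m = 0 by omega)]
      split_ifs <;> apply Prod.ext <;> simp [zero_pow hp.out.ne_zero]
    · -- n = 0 < m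
      subst hn
      refine ⟨a * b ^ p, ?_⟩
      rw [hxy, ha, hb, if_neg (show ¬ m < 0 by omega), if_neg (show ¬ m = 0 by omega),
        if_neg (show ¬ (0:ℤ) < 0 by omega), if_pos (rfl : (0:ℤ) = 0),
        if_neg (show ¬ m + 0 < 0 by omega), if_neg (show ¬ m + 0 = 0 by omega)]
      have htn : (m + 0).toNat = m.toNat := by omega
      rw [htn]
      apply Prod.ext <;> simp <;> ring
    · -- 0 < m, 0 < n
      refine ⟨a * b, ?_⟩
      rw [hxy, ha, hb, if_neg (show ¬ m < 0 by omega), if_neg (show ¬ m = 0 by omega),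
        if_neg (show ¬ n < 0 by omega), if_neg (show ¬ n = 0 by omega),
        if_neg (show ¬ m + n < 0 by omega), if_neg (show ¬ m + n = 0 by omega)]
      have htn : (m + n).toNat = m.toNat + n.toNat := by omega
      rw [htn]
      apply Prod.ext <;> simp [pow_add] <;> ring
  isInternal := zipGrade_isInternal p R
  σ := zipSigma p R
  τ := zipTau p R
  σ_mem := fun _ => zipIota_mem_zero p R _
  τ_mem := fun _ => zipIota_mem_zero p R _
  τ_id := by
    rintro s ⟨a, ha⟩
    norm_num at ha
    apply Subtype.ext
    rw [zipTau_apply, ha, coe_zipIota]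
    simp
  τ_bij := by
    intro n hn
    have hkey : ∀ x : zipSubring p R, x ∈ zipGrade p R (-(n : ℤ)) →
        ∃ a : R, (x : Polynomial R × Polynomial R)
          = (Polynomial.C a * Polynomial.X ^ n, 0) := by
      rintro x ⟨a, ha⟩
      refine ⟨a, ?_⟩
      rw [ha, if_pos (by omega : -(n : ℤ) < 0)]
      have : (-(-(n : ℤ))).toNat = n := by omega
      rw [this]
    refine ⟨?_, ?_, ?_⟩
    · rintro x hx
      obtain ⟨a, ha⟩ := hkey x hx
      refine ⟨a, ?_⟩
      rw [zipTau_apply, ha, coe_zipIota]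
      norm_num
    · rintro x hx y hy hxy
      obtain ⟨a, ha⟩ := hkey x hx
      obtain ⟨b, hb⟩ := hkey y hy
      simp only [zipTau_apply, ha, hb] at hxy
      norm_num at hxy
      have h2 := congrArg
        (fun z : zipSubring p R => ((z : Polynomial R × Polynomial R).1).coeff 0) hxy
      simp only [coe_zipIota, Polynomial.coeff_C_zero] at h2
      apply Subtype.ext
      rw [ha, hb, h2]
    · rintro y ⟨b, hb⟩
      norm_num at hb
      have hmem : ((Polynomial.C b * Polynomial.X ^ n, 0) : Polynomial R × Polynomial R)
          ∈ zipSubring p R := by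
        have hcoeff : (Polynomial.C b * Polynomial.X ^ n).coeff 0 ^ p
            = (0 : Polynomial R).coeff 0 := by
          rw [Polynomial.coeff_C_mul, Polynomial.coeff_X_pow,
            if_neg (by omega : ¬ (0 : ℕ) = n)]
          simp [zero_pow hp.out.ne_zero]
        exact hcoeff
      refine ⟨⟨_, hmem⟩, ⟨b, ?_⟩, ?_⟩
      · rw [if_pos (by omega : -(n : ℤ) < 0)]
        have : (-(-(n : ℤ))).toNat = n := by omega
        rw [this]
      · apply Subtype.ext
        rw [zipTau_apply]
        show ((zipIota p R ((Polynomial.C b * Polynomial.X ^ n).eval 1) : zipSubring p R)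
          : Polynomial R × Polynomial R) = (y : Polynomial R × Polynomial R)
        rw [hb]
        norm_num [coe_zipIota]
  t := zipT p R
  t_mem := ⟨1, by
    rw [if_pos (by norm_num : (-1 : ℤ) < 0)]
    show ((Polynomial.X, 0) : Polynomial R × Polynomial R) = _
    norm_num⟩
  τ_t := by
    apply Subtype.ext
    rw [zipTau_apply]
    show ((zipIota p R ((zipT p R : Polynomial R × Polynomial R).1.eval 1) : zipSubring p R)
      : Polynomial R × Polynomial R) = ((1 : zipSubring p R) : Polynomial R × Polynomial R)
    norm_num [zipT, coe_zipIota]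
  σ_frob := by
    rintro s ⟨a, ha⟩
    norm_num at ha
    refine ⟨0, zero_mem _, ?_⟩
    have h0 : ((p : ℕ) : zipSubring p R) * 0 = 0 := by ring
    rw [h0, add_zero]
    apply Subtype.ext
    have hsp : ((s ^ p : zipSubring p R) : Polynomial R × Polynomial R)
        = (s : Polynomial R × Polynomial R) ^ p := rfl
    rw [zipSigma_apply, ha, coe_zipIota, hsp, ha]
    norm_num [Prod.ext_iff, Prod.pow_fst, Prod.pow_snd, ← map_pow]
  σ_t := by
    apply Subtype.ext
    rw [zipSigma_apply, zip_charP]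
    show ((zipIota p R ((zipT p R : Polynomial R × Polynomial R).2.eval 1) : zipSubring p R)
      : Polynomial R × Polynomial R) = ((0 : zipSubring p R) : Polynomial R × Polynomial R)
    norm_num [zipT, coe_zipIota, zero_pow hp.out.ne_zero]
  p_jac := by
    intro x hx
    refine ⟨1, ⟨1, by norm_num <;> rfl⟩, ?_⟩
    rw [zip_charP]
    ring

end Zip

/-!
A frame homomorphism `φ : S → 𝕎₁(R)` preserves degrees, and a homogeneous element of `𝕎₁(R)`
of degree `n` is determined by its images under `π₀` and `π₀ ∘ σ`; compatibility with `π` and `σ`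
forces these to be `π a` and `π (σ a)`, so `φ` is unique. For existence, sending `a ∈ Sₙ` to
`π(a) X^max(-n,0)`, resp. to `π(σ a) X^max(n,0)`, defines ring homomorphisms `S → R[X]`, because
`π` kills `Sₙ` for `n > 0` and `π ∘ σ` kills `Sₙ` for `n < 0`. The pair lands in the fibre product
`𝕎₁(R) = R[X] ×_R R[X]` because `π ∘ σ = Frob ∘ π` on `S₀`.
-/

open Polynomial

section GradedRing

variable {ι σ A B : Type*} [DecidableEq ι] [AddCommMonoid ι] [CommRing A] [SetLike σ A]
  [AddSubgroupClass σ A] (𝒜 : ι → σ) [GradedRing 𝒜] [CommRing B]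

theorem GradedRing.ringHom_ext {f g : A →+* B} (h : ∀ i, ∀ a ∈ 𝒜 i, f a = g a) : f = g :=
  RingHom.ext fun a => DirectSum.Decomposition.inductionOn 𝒜 (by simp only [map_zero])
    (fun m => h _ _ m.2) (fun _ _ h₁ h₂ => by rw [map_add, map_add, h₁, h₂]) a

-- Exponents are truncated at `0`; the vanishing hypothesis is what makes this multiplicative.
noncomputable def weightedMonomialHom (χ : A →+* B) (w : ι →+ ℤ)
    (hχ : ∀ i, w i < 0 → ∀ a ∈ 𝒜 i, χ a = 0) : A →+* B[X] :=
  (DirectSum.toSemiring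
    (fun i => (monomial (w i).toNat).toAddMonoidHom.comp
      (χ.toAddMonoidHom.comp (AddSubmonoidClass.subtype (𝒜 i))))
    (by simp)
    (by
      intro i j a b
      simp only [AddMonoidHom.coe_comp, Function.comp_apply, LinearMap.toAddMonoidHom_coe,
        AddSubmonoidClass.coe_subtype, RingHom.toAddMonoidHom_eq_coe, AddMonoidHom.coe_coe,
        SetLike.coe_gMul, map_mul]
      by_cases hi : w i < 0
      · simp [hχ i hi a a.2]
      by_cases hj : w j < 0
      · simp [hχ j hj b b.2]
      rw [monomial_mul_monomial, map_add, Int.toNat_add (by omega) (by omega)])).comp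
    (DirectSum.decomposeRingEquiv 𝒜).toRingHom

variable {𝒜} (χ : A →+* B) (w : ι →+ ℤ) (hχ : ∀ i, w i < 0 → ∀ a ∈ 𝒜 i, χ a = 0)

theorem weightedMonomialHom_of_mem {i : ι} {a : A} (ha : a ∈ 𝒜 i) :
    weightedMonomialHom 𝒜 χ w hχ a = C (χ a) * X ^ (w i).toNat := by
  have hdec : DirectSum.decomposeRingEquiv 𝒜 a = DirectSum.of (fun i => 𝒜 i) i ⟨a, ha⟩ :=
    DirectSum.decompose_of_mem 𝒜 ha
  rw [C_mul_X_pow_eq_monomial, weightedMonomialHom, RingHom.comp_apply, RingEquiv.toRingHom_eq_coe,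
    RingEquiv.coe_toRingHom, hdec, DirectSum.toSemiring_of]
  rfl

theorem eval_one_weightedMonomialHom (a : A) :
    (weightedMonomialHom 𝒜 χ w hχ a).eval 1 = χ a := by
  refine RingHom.congr_fun (GradedRing.ringHom_ext 𝒜
    (f := (evalRingHom 1).comp (weightedMonomialHom 𝒜 χ w hχ)) fun i b hb => ?_) a
  simp [weightedMonomialHom_of_mem χ w hχ hb]

end GradedRing

section ZipFrame

variable [Fact p.Prime] {R : Type} [CommRing R] [CharP R p]

theorem mem_zipGrade_iff {n : ℤ} {x : zipSubring p R} :
    x ∈ zipGrade p R n ↔ ∃ f g : R, (x : R[X] × R[X]) = (C f * X ^ (-n).toNat, C g * X ^ n.toNat)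
      ∧ (n < 0 → g = 0) ∧ (0 < n → f = 0) := by
  change (∃ c : R, _ = _) ↔ _
  rcases lt_trichotomy n 0 with hn | rfl | hn
  · have h0 : n.toNat = 0 := by omega
    simp [hn, h0, hn.not_gt]
  · have hx : (x : R[X] × R[X]).1.coeff 0 ^ p = (x : R[X] × R[X]).2.coeff 0 := x.2
    simp only [lt_self_iff_false, if_false, if_true, neg_zero, Int.toNat_zero, pow_zero, mul_one,
      IsEmpty.forall_iff, and_true]
    constructor
    · rintro ⟨c, hc⟩
      exact ⟨c, c ^ p, hc⟩
    · rintro ⟨f, g, hfg⟩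
      rw [hfg] at hx
      simp only [coeff_C_zero] at hx
      exact ⟨f, by rw [hfg, hx]⟩
  · have h0 : (-n).toNat = 0 := by omega
    simp [hn, h0, hn.ne', hn.not_gt]

theorem zipPi_zipIota (a : R) : zipPi p R (zipIota p R a) = a := by
  change ((zipIota p R a : zipSubring p R) : R[X] × R[X]).1.eval 1 = a
  simp [coe_zipIota]

end ZipFrame

namespace Frame

section

variable (F : Frame p S)

noncomputable instance gradedRing : GradedRing F.grade :=
  { F.isInternal.chooseDecomposition with
    one_mem := F.one_mem
    mul_mem := fun _ _ _ _ => F.mul_mem }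

theorem t_pow_mem (n : ℕ) : F.t ^ n ∈ F.grade (-n) := by
  induction n with
  | zero => simpa using F.one_mem
  | succ k ih => rw [pow_succ, Nat.cast_succ, neg_add]; exact F.mul_mem ih F.t_mem

theorem eq_t_pow_mul_τ {n : ℕ} (hn : 1 ≤ n) {a : S} (ha : a ∈ F.grade (-n)) :
    a = F.t ^ n * F.τ a :=
  (F.τ_bij n hn).injOn ha (by simpa using F.mul_mem (F.t_pow_mem n) (F.τ_mem a))
    (by rw [map_mul, map_pow, F.τ_t, one_pow, one_mul, F.τ_id _ (F.τ_mem a)])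

variable {R : Type} [CommRing R] (π : S →+* R)

theorem map_σ_of_mem_zero [CharP R p] {a : S} (ha : a ∈ F.grade 0) : π (F.σ a) = π a ^ p := by
  obtain ⟨c, -, hc⟩ := F.σ_frob a ha
  simp [hc]

-- `σ(t) = p` vanishes in `R`, and every element of negative degree is divisible by `t`.
theorem map_σ_of_neg [CharP R p] {n : ℤ} (hn : n < 0) {a : S} (ha : a ∈ F.grade n) :
    π (F.σ a) = 0 := by
  obtain ⟨k, rfl⟩ : ∃ k : ℕ, n = -k := ⟨(-n).toNat, by omega⟩
  rw [F.eq_t_pow_mul_τ (by omega) ha]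
  simp [F.σ_t, zero_pow (by omega : k ≠ 0)]

-- For `a` of degree `k + 1`, `τ a = τ (t^(k+1) a)` and `t^(k+1) a ∈ tS₁`.
theorem map_eq_zero_of_pos (hπτ : ∀ s, π s = π (F.τ s))
    (hπt : ∀ x ∈ F.grade 1, π (F.t * x) = 0) {n : ℤ} (hn : 0 < n) {a : S} (ha : a ∈ F.grade n) :
    π a = 0 := by
  obtain ⟨k, rfl⟩ : ∃ k : ℕ, n = k + 1 := ⟨(n - 1).toNat, by omega⟩
  have hx : F.t ^ k * a ∈ F.grade 1 := by simpa using F.mul_mem (F.t_pow_mem k) ha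
  calc π a = π (F.τ (F.t * (F.t ^ k * a))) := by simp [hπτ a, F.τ_t]
    _ = 0 := by rw [← hπτ, hπt _ hx]

end

variable {R : Type} [CommRing R] (F : Frame p S) (π : S →+* R)
  (hπτ : ∀ s, π s = π (F.τ s)) (hπt : ∀ x ∈ F.grade 1, π (F.t * x) = 0)

noncomputable def toZipFst : S →+* R[X] :=
  weightedMonomialHom F.grade π (-AddMonoidHom.id ℤ) fun _ hn _ ha =>
    F.map_eq_zero_of_pos π hπτ hπt (by simpa using hn) ha

noncomputable def toZipSnd [CharP R p] : S →+* R[X] :=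
  weightedMonomialHom F.grade (π.comp F.σ) (AddMonoidHom.id ℤ) fun _ hn _ ha =>
    F.map_σ_of_neg π hn ha

variable {F π}

theorem toZipFst_of_mem {n : ℤ} {a : S} (ha : a ∈ F.grade n) :
    F.toZipFst π hπτ hπt a = C (π a) * X ^ (-n).toNat :=
  weightedMonomialHom_of_mem _ _ _ ha

theorem eval_one_toZipFst (s : S) : (F.toZipFst π hπτ hπt s).eval 1 = π s :=
  eval_one_weightedMonomialHom _ _ _ s

variable [CharP R p]

theorem toZipSnd_of_mem {n : ℤ} {a : S} (ha : a ∈ F.grade n) :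
    F.toZipSnd π a = C (π (F.σ a)) * X ^ n.toNat :=
  weightedMonomialHom_of_mem _ _ _ ha

theorem eval_one_toZipSnd (s : S) : (F.toZipSnd π s).eval 1 = π (F.σ s) :=
  eval_one_weightedMonomialHom _ _ _ s

variable [Fact p.Prime]

theorem coeff_zero_toZipFst_pow (s : S) :
    (F.toZipFst π hπτ hπt s).coeff 0 ^ p = (F.toZipSnd π s).coeff 0 := by
  refine RingHom.congr_fun (GradedRing.ringHom_ext F.grade
    (f := (frobenius R p).comp (constantCoeff.comp (F.toZipFst π hπτ hπt)))
    (g := constantCoeff.comp (F.toZipSnd π)) fun n a ha => ?_) s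
  simp only [RingHom.comp_apply, constantCoeff_apply, frobenius_def,
    toZipFst_of_mem hπτ hπt ha, toZipSnd_of_mem ha, coeff_C_mul, coeff_X_pow]
  rcases lt_trichotomy n 0 with hn | rfl | hn
  · simp only [F.map_σ_of_neg π hn ha, if_neg (by omega : ¬0 = (-n).toNat), mul_zero, zero_mul,
      zero_pow (Fact.out (p := p.Prime)).ne_zero]
  · simp [F.map_σ_of_mem_zero π ha]
  · simp only [F.map_eq_zero_of_pos π hπτ hπt hn ha, if_neg (by omega : ¬0 = n.toNat), mul_zero,
      zero_mul, zero_pow (Fact.out (p := p.Prime)).ne_zero]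

variable (F π)

noncomputable def toZip : S →+* zipSubring p R :=
  ((F.toZipFst π hπτ hπt).prod (F.toZipSnd π)).codRestrict (zipSubring p R)
    (coeff_zero_toZipFst_pow hπτ hπt)

variable {F π}

theorem coe_toZip (s : S) :
    (F.toZip π hπτ hπt s : R[X] × R[X]) = (F.toZipFst π hπτ hπt s, F.toZipSnd π s) := rfl

theorem toZip_mem_zipGrade {n : ℤ} {a : S} (ha : a ∈ F.grade n) :
    F.toZip π hπτ hπt a ∈ zipGrade p R n :=
  mem_zipGrade_iff.2 ⟨π a, π (F.σ a),
    by rw [coe_toZip, toZipFst_of_mem hπτ hπt ha, toZipSnd_of_mem ha],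
    fun hn => F.map_σ_of_neg π hn ha, fun hn => F.map_eq_zero_of_pos π hπτ hπt hn ha⟩

theorem toZip_of_mem_zero {a : S} (ha : a ∈ F.grade 0) :
    F.toZip π hπτ hπt a = zipIota p R (π a) :=
  Subtype.ext <| by
    simp [coe_toZip, toZipFst_of_mem hπτ hπt ha, toZipSnd_of_mem ha, coe_zipIota,
      F.map_σ_of_mem_zero π ha]

theorem zipPi_toZip (s : S) : zipPi p R (F.toZip π hπτ hπt s) = π s :=
  eval_one_toZipFst hπτ hπt s

theorem toZip_σ (s : S) : F.toZip π hπτ hπt (F.σ s) = zipSigma p R (F.toZip π hπτ hπt s) := by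
  rw [toZip_of_mem_zero hπτ hπt (F.σ_mem s), zipSigma_apply, coe_toZip, eval_one_toZipSnd]

theorem toZip_τ (s : S) : F.toZip π hπτ hπt (F.τ s) = zipTau p R (F.toZip π hπτ hπt s) := by
  rw [toZip_of_mem_zero hπτ hπt (F.τ_mem s), zipTau_apply, coe_toZip, eval_one_toZipFst, ← hπτ]

variable {φ : S →+* zipSubring p R}

theorem coe_apply_of_mem (hgr : ∀ n, ∀ a ∈ F.grade n, φ a ∈ zipGrade p R n)
    (hσ : ∀ s, φ (F.σ s) = zipSigma p R (φ s)) (hπ : (zipPi p R).comp φ = π)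
    {n : ℤ} {a : S} (ha : a ∈ F.grade n) :
    (φ a : R[X] × R[X]) = (C (π a) * X ^ (-n).toNat, C (π (F.σ a)) * X ^ n.toNat) := by
  obtain ⟨f, g, hfg, -⟩ := mem_zipGrade_iff.1 (hgr n a ha)
  have hf : π a = f := by
    rw [← hπ]
    change ((φ a : R[X] × R[X]).1).eval 1 = f
    simp [hfg]
  have hg : π (F.σ a) = g := by
    rw [← hπ, RingHom.comp_apply, hσ, zipSigma_apply, zipPi_zipIota, hfg]
    simp
  rw [hfg, hf, hg]

theorem eq_toZip (hgr : ∀ n, ∀ a ∈ F.grade n, φ a ∈ zipGrade p R n)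
    (hσ : ∀ s, φ (F.σ s) = zipSigma p R (φ s)) (hπ : (zipPi p R).comp φ = π) :
    φ = F.toZip π hπτ hπt :=
  GradedRing.ringHom_ext F.grade fun _ _ ha => Subtype.ext <| by
    rw [coe_apply_of_mem hgr hσ hπ ha,
      coe_apply_of_mem (fun _ _ => toZip_mem_zipGrade hπτ hπt) (toZip_σ hπτ hπt)
        (RingHom.ext (zipPi_toZip hπτ hπt)) ha]

end Frame

theorem zipFrame_final_general (p : ℕ) [hp : Fact p.Prime] (R : Type) [CommRing R] [CharP R p]
    {S : Type} [CommRing S] (F : Frame p S)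
    (π : S →+* R)
    (hπτ : ∀ s, π s = π (F.τ s))
    (hπker : ∀ a ∈ F.grade 0, (π a = 0 ↔ ∃ x ∈ F.grade 1, a = F.t * x)) :
    (∃! φ : S →+* zipSubring p R,
      (∀ (n : ℤ), ∀ a ∈ F.grade n, φ a ∈ (zipFrame p R).grade n)
      ∧ (∀ s, φ (F.σ s) = (zipFrame p R).σ (φ s))
      ∧ (∀ s, φ (F.τ s) = (zipFrame p R).τ (φ s))
      ∧ (zipPi p R).comp φ = π)
    ∧ (∀ φ : S →+* zipSubring p R,
      (∀ (n : ℤ), ∀ a ∈ F.grade n, φ a ∈ (zipFrame p R).grade n) →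
      (∀ s, φ (F.σ s) = (zipFrame p R).σ (φ s)) →
      (∀ s, φ (F.τ s) = (zipFrame p R).τ (φ s)) →
      (zipPi p R).comp φ = π →
      ((∀ a ∈ F.grade 0, φ a = zipIota p R (π a))
        ∧ (∀ n : ℕ, 1 ≤ n → ∀ a ∈ F.grade (-(n : ℤ)),
            ((φ a : zipSubring p R) : Polynomial R × Polynomial R)
              = (Polynomial.C (π (F.τ a)) * Polynomial.X ^ n, 0))
        ∧ (∀ n : ℕ, 1 ≤ n → ∀ a ∈ F.grade (n : ℤ),
            ((φ a : zipSubring p R) : Polynomial R × Polynomial R)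
              = (0, Polynomial.C (π (F.σ a)) * Polynomial.X ^ n)))) := by
  have hπt : ∀ x ∈ F.grade 1, π (F.t * x) = 0 := fun x hx =>
    (hπker _ (by simpa using F.mul_mem F.t_mem hx)).2 ⟨x, hx, rfl⟩
  refine ⟨⟨F.toZip π hπτ hπt, ⟨fun _ _ => Frame.toZip_mem_zipGrade hπτ hπt,
      Frame.toZip_σ hπτ hπt, Frame.toZip_τ hπτ hπt, RingHom.ext (Frame.zipPi_toZip hπτ hπt)⟩,
    fun φ ⟨hgr, hσ, _, hπ⟩ => Frame.eq_toZip hπτ hπt hgr hσ hπ⟩, ?_⟩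
  intro φ hgr hσ _ hπ
  have hφ {n : ℤ} {a : S} (ha : a ∈ F.grade n) := Frame.coe_apply_of_mem hgr hσ hπ ha
  refine ⟨fun a ha => Subtype.ext ?_, fun n hn a ha => ?_, fun n hn a ha => ?_⟩
  · simp [hφ ha, coe_zipIota, F.map_σ_of_mem_zero π ha]
  · simp [hφ ha, ← hπτ, F.map_σ_of_neg π (by omega) ha]
  · simp [hφ ha, F.map_eq_zero_of_pos π hπτ hπt (by omega) ha]

/-- Let `R` be a commutative `𝔽_p`-algebra and `𝕎₁(R)` the zip frame of `R`.
Then `𝕎₁(R)` is a final object among frames for `R`: for every frame `(S, σ, τ)` for `R`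
(the identification of `S₀/tS₁` with `R` being recorded by the ring homomorphism
`π : S → R`, which is the projection on `S₀` and satisfies `π = π ∘ τ`), there is a unique
homomorphism of frames `S → 𝕎₁(R)` inducing the identity of `R`, and it is assembled from
the maps `π₀ = π|_{S₀}`, `π₋ₙ = π₀ ∘ τ` and `πₙ = π₀ ∘ σ`. -/
theorem zipFrame_final (p : ℕ) [hp : Fact p.Prime] (R : Type) [CommRing R] [CharP R p]
    {S : Type} [CommRing S] (F : Frame p S)
    (π : S →+* R)
    (hπτ : ∀ s, π s = π (F.τ s))
    (hπsurj : Function.Surjective π)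
    (hπker : ∀ a ∈ F.grade 0, (π a = 0 ↔ ∃ x ∈ F.grade 1, a = F.t * x)) :
    (∃! φ : S →+* zipSubring p R,
      (∀ (n : ℤ), ∀ a ∈ F.grade n, φ a ∈ (zipFrame p R).grade n)
      ∧ (∀ s, φ (F.σ s) = (zipFrame p R).σ (φ s))
      ∧ (∀ s, φ (F.τ s) = (zipFrame p R).τ (φ s))
      ∧ (zipPi p R).comp φ = π)
    ∧ (∀ φ : S →+* zipSubring p R,
      (∀ (n : ℤ), ∀ a ∈ F.grade n, φ a ∈ (zipFrame p R).grade n) →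
      (∀ s, φ (F.σ s) = (zipFrame p R).σ (φ s)) →
      (∀ s, φ (F.τ s) = (zipFrame p R).τ (φ s)) →
      (zipPi p R).comp φ = π →
      ((∀ a ∈ F.grade 0, φ a = zipIota p R (π a))
        ∧ (∀ n : ℕ, 1 ≤ n → ∀ a ∈ F.grade (-(n : ℤ)),
            ((φ a : zipSubring p R) : Polynomial R × Polynomial R)
              = (Polynomial.C (π (F.τ a)) * Polynomial.X ^ n, 0))
        ∧ (∀ n : ℕ, 1 ≤ n → ∀ a ∈ F.grade (n : ℤ),
            ((φ a : zipSubring p R) : Polynomial R × Polynomial R)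
              = (0, Polynomial.C (π (F.σ a)) * Polynomial.X ^ n)))) :=
  zipFrame_final_general p (hp := hp) R F π hπτ hπker
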